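/- arXiv:1112.0375 — 5 statements merged into one kernel-verified Lean document; each statement's English description precedes it below -/
import Mathlib

section
/- If R ↪ S is an algebra retract of reduced commutative rings (i.e., there is a ring homomorphism S → R whose composition with the inclusion R → S is the identity on R) and S is seminormal, then R is seminormal. -/
theorem stmt_1_general (R S : Type) [CommRing R] [CommRing S]
    (f : R →+* S) (r : S →+* R) (hretract : r.comp f = RingHom.id R)
    (hS : ∀ x y : S, x ^ 2 = y ^ 3 → ∃ z : S, x = z ^ 3 ∧ y = z ^ 2) :
    ∀ x y : R, x ^ 2 = y ^ 3 → ∃ z : R, x = z ^ 3 ∧ y = z ^ 2 := by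
  have hrf (a : R) : r (f a) = a := RingHom.congr_fun hretract a
  intro x y hxy
  obtain ⟨z, hx, hy⟩ := hS (f x) (f y) (by rw [← map_pow, ← map_pow, hxy])
  exact ⟨r z, by rw [← map_pow, ← hx, hrf], by rw [← map_pow, ← hy, hrf]⟩

/-- If `R ↪ S` is an algebra retract of reduced commutative rings and `S` is seminormal,
then `R` is seminormal. -/
theorem stmt_1 (R S : Type) [CommRing R] [CommRing S] [IsReduced R] [IsReduced S]
    (f : R →+* S) (r : S →+* R) (hretract : r.comp f = RingHom.id R)
    (hS : ∀ x y : S, x ^ 2 = y ^ 3 → ∃ z : S, x = z ^ 3 ∧ y = z ^ 2) :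
    ∀ x y : R, x ^ 2 = y ^ 3 → ∃ z : R, x = z ^ 3 ∧ y = z ^ 2 :=
  stmt_1_general R S f r hretract hS
end

section
/- Let M be an affine monoid (finitely generated submonoid of ℤ^d). If M is seminormal, then ℤM ∩ relint(ℝ₊M) ⊆ M, where relint denotes the relative interior of the cone ℝ₊M generated by M. -/
/-!
Write `x = a - b` with `a, b ∈ M`. Since `x` lies in the relative interior of `ℝ₊M` and `b` in
its linear span, `N • x - b ∈ ℝ₊M` for some `N > 0`. By Carathéodory's theorem for cones a lattice
point of `ℝ₊M` is a nonnegative combination of linearly independent elements of `M`, whose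
coefficients are then rational, so `D • (N • x - b) ∈ M` for some `D > 0`. Hence both
`D N • x` and `(D N + 1) • x = D • (N • x - b) + a + (D - 1) • b` lie in `M`, so `n • x ∈ M` for
all large `n`; seminormality (`2 • y, 3 • y ∈ M → y ∈ M`) then lowers this threshold down to `1`.
-/

/-- The real cone `ℝ₊M` generated by a submonoid `M ⊆ ℤ^d`: all finite nonnegative real
combinations of elements of `M`. -/
def realCone {d : ℕ} (M : AddSubmonoid (Fin d → ℤ)) : Set (Fin d → ℝ) :=
  {y | ∃ (s : Finset (Fin d → ℤ)) (c : (Fin d → ℤ) → ℝ),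
    (∀ v ∈ s, v ∈ M ∧ 0 ≤ c v) ∧ y = ∑ v ∈ s, c v • (fun i => (v i : ℝ))}

open Finset

section Caratheodory

variable {K E ι : Type*} [Field K] [LinearOrder K] [IsStrictOrderedRing K]
  [AddCommGroup E] [Module K E] [DecidableEq ι] {v : ι → E}

theorem exists_erase_sum_smul_eq_of_not_linearIndepOn {s : Finset ι} {c : ι → K}
    (hc : ∀ i ∈ s, 0 ≤ c i) (hdep : ¬LinearIndepOn K v s) :
    ∃ i ∈ s, ∃ c' : ι → K, (∀ j ∈ s.erase i, 0 ≤ c' j) ∧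
      ∑ j ∈ s.erase i, c' j • v j = ∑ j ∈ s, c j • v j := by
  obtain ⟨g, hg, hpos⟩ : ∃ g : ι → K, ∑ i ∈ s, g i • v i = 0 ∧ ∃ i ∈ s, 0 < g i := by
    obtain ⟨g, hg, i, hi, hgi⟩ := not_linearIndepOn_finset_iff.mp hdep
    rcases hgi.lt_or_gt with hneg | hpos
    · exact ⟨-g, by simp [neg_smul, hg], i, hi, by simpa using hneg⟩
    · exact ⟨g, hg, i, hi, hpos⟩
  -- move along the relation `g` until the first coefficient of `c` hits zero
  obtain ⟨i, hi, hmin⟩ := exists_min_image {j ∈ s | 0 < g j} (fun j => c j / g j)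
    (by obtain ⟨i, hi, hgi⟩ := hpos; exact ⟨i, mem_filter.mpr ⟨hi, hgi⟩⟩)
  obtain ⟨his, hgi⟩ := mem_filter.mp hi
  set t := c i / g i
  have ht : 0 ≤ t := div_nonneg (hc i his) hgi.le
  refine ⟨i, his, fun j => c j - t * g j, fun j hj => ?_, ?_⟩
  · have hjs := mem_of_mem_erase hj
    rcases le_or_gt (g j) 0 with hgj | hgj
    · nlinarith [hc j hjs]
    · have := hmin j (mem_filter.mpr ⟨hjs, hgj⟩)
      rw [le_div_iff₀ hgj] at this
      linarith
  · have hci : c i - t * g i = 0 := by simp [t, hgi.ne']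
    rw [sum_erase _ (by simp [hci]), sum_congr rfl fun j _ => sub_smul _ _ _, sum_sub_distrib,
      sum_congr rfl fun j _ => mul_smul t (g j) (v j), ← smul_sum, hg, smul_zero, sub_zero]

theorem exists_linearIndepOn_sum_smul_eq (s : Finset ι) (c : ι → K) (hc : ∀ i ∈ s, 0 ≤ c i) :
    ∃ t ⊆ s, ∃ c' : ι → K, (∀ i ∈ t, 0 ≤ c' i) ∧ LinearIndepOn K v t ∧
      ∑ i ∈ t, c' i • v i = ∑ i ∈ s, c i • v i := by
  induction s using Finset.strongInduction generalizing c with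
  | H s ih =>
    by_cases hli : LinearIndepOn K v s
    · exact ⟨s, subset_rfl, c, hc, hli, rfl⟩
    obtain ⟨i, hi, c₁, hc₁, hsum₁⟩ := exists_erase_sum_smul_eq_of_not_linearIndepOn hc hli
    obtain ⟨t, hts, c', hc', hli', hsum'⟩ := ih _ (erase_ssubset hi) c₁ hc₁
    exact ⟨t, hts.trans (erase_subset _ _), c', hc', hli', hsum'.trans hsum₁⟩

end Caratheodory

theorem exists_rat_eq_of_linearIndepOn {ι κ : Type*} {w : ι → κ → ℤ} {t : Finset ι}
    (hli : LinearIndepOn ℝ (fun i k => (w i k : ℝ)) t) {c : ι → ℝ} {z : κ → ℤ}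
    (h : ∑ i ∈ t, c i • (fun k => (w i k : ℝ)) = fun k => (z k : ℝ)) :
    ∃ q : ι → ℚ, ∀ i ∈ t, c i = q i := by
  -- a `ℚ`-linear retraction `ℝ → ℚ` turns the real coefficients into rational ones
  obtain ⟨π, hπ⟩ := (Algebra.linearMap ℚ ℝ).exists_leftInverse_of_injective
    (LinearMap.ker_eq_bot.mpr (algebraMap ℚ ℝ).injective)
  have hπint (n : ℤ) : π n = n := by
    simpa using LinearMap.congr_fun hπ (n : ℚ)
  have hπ_mul (r : ℝ) (n : ℤ) : π (r * n) = π r * n := by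
    rw [mul_comm, ← zsmul_eq_mul, map_zsmul, zsmul_eq_mul, mul_comm]
  refine ⟨fun i => π (c i), fun i hi => ?_⟩
  have hrat : ∑ i ∈ t, ((π (c i) : ℝ)) • (fun k => (w i k : ℝ)) = fun k => (z k : ℝ) := by
    funext k
    have hk := congrArg π (congrFun h k)
    simp only [Finset.sum_apply, Pi.smul_apply, smul_eq_mul, map_sum, hπ_mul, hπint] at hk
    simpa using congrArg (fun q : ℚ => (q : ℝ)) hk
  have hzero : ∑ i ∈ t, (c i - π (c i)) • (fun k => (w i k : ℝ)) = 0 := by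
    simp only [sub_smul, sum_sub_distrib, h, hrat, sub_self]
  exact sub_eq_zero.mp (linearIndepOn_finset_iff.mp hli _ hzero i hi)

theorem exists_pos_nat_mul_eq_nat {ι : Type*} [DecidableEq ι] (t : Finset ι) (q : ι → ℚ)
    (hq : ∀ i ∈ t, 0 ≤ q i) : ∃ D : ℕ, 0 < D ∧ ∀ i ∈ t, ∃ n : ℕ, (D : ℚ) * q i = n := by
  refine ⟨∏ i ∈ t, (q i).den, prod_pos fun i _ => (q i).pos, fun i hi => ?_⟩
  refine ⟨(∏ j ∈ t.erase i, (q j).den) * (q i).num.toNat, ?_⟩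
  have hnum : ((q i).num.toNat : ℚ) = (q i).num := by
    exact_mod_cast Int.toNat_of_nonneg (Rat.num_nonneg.mpr (hq i hi))
  rw [← mul_prod_erase t _ hi]
  push_cast
  rw [hnum, ← Rat.mul_den_eq_num]
  ring

namespace realCone

variable {d : ℕ} (M : AddSubmonoid (Fin d → ℤ))

theorem zero_mem : (0 : Fin d → ℝ) ∈ realCone M :=
  ⟨∅, 0, by simp, by simp⟩

theorem cast_mem {b : Fin d → ℤ} (hb : b ∈ M) : (fun i => (b i : ℝ)) ∈ realCone M :=
  ⟨{b}, fun _ => 1, by simpa using hb, by simp⟩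

theorem smul_mem {r : ℝ} (hr : 0 ≤ r) {y : Fin d → ℝ} (hy : y ∈ realCone M) :
    r • y ∈ realCone M := by
  obtain ⟨s, c, hsc, rfl⟩ := hy
  refine ⟨s, r • c, fun v hv => ⟨(hsc v hv).1, mul_nonneg hr (hsc v hv).2⟩, ?_⟩
  simp only [smul_sum, Pi.smul_apply, smul_smul, smul_eq_mul]

theorem exists_pos_nsmul_mem {z : Fin d → ℤ} (hz : (fun i => (z i : ℝ)) ∈ realCone M) :
    ∃ D : ℕ, 0 < D ∧ D • z ∈ M := by
  classical
  obtain ⟨s, c, hsc, hz⟩ := hz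
  obtain ⟨t, hts, c', hc', hli, hsum⟩ := exists_linearIndepOn_sum_smul_eq
    (v := fun (v : Fin d → ℤ) i => (v i : ℝ)) s c fun v hv => (hsc v hv).2
  have hcomb := hsum.trans hz.symm
  obtain ⟨q, hq⟩ := exists_rat_eq_of_linearIndepOn (w := fun v => v) hli hcomb
  obtain ⟨D, hD, hn⟩ := exists_pos_nat_mul_eq_nat t q fun v hv => by
    exact_mod_cast (hq v hv) ▸ hc' v hv
  choose! n hn using hn
  refine ⟨D, hD, ?_⟩
  have hDz : D • z = ∑ v ∈ t, n v • v := by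
    funext i
    have hi := congrFun hcomb i
    simp only [Finset.sum_apply, Pi.smul_apply, smul_eq_mul] at hi
    apply Int.cast_injective (α := ℝ)
    simp only [Pi.smul_apply, Finset.sum_apply, nsmul_eq_mul, Int.cast_mul, Int.cast_natCast,
      Int.cast_sum, ← hi, mul_sum]
    refine sum_congr rfl fun v hv => ?_
    rw [hq v hv, ← mul_assoc]
    exact_mod_cast congrArg (fun r : ℚ => (r : ℝ) * (v i : ℝ)) (hn v hv)
  rw [hDz]
  exact sum_mem fun v hv => nsmul_mem (hsc v (hts hv)).1 _

end realCone

open Filter Topology in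
theorem eventually_add_smul_mem_of_mem_intrinsicInterior {E : Type*} [AddCommGroup E]
    [Module ℝ E] [TopologicalSpace E] [IsTopologicalAddGroup E] [ContinuousSMul ℝ E]
    {s : Set E} {x v : E} (hx : x ∈ intrinsicInterior ℝ s) (hv : v ∈ (affineSpan ℝ s).direction) :
    ∀ᶠ t in 𝓝 (0 : ℝ), x + t • v ∈ s := by
  obtain ⟨y, hy, rfl⟩ := mem_intrinsicInterior.mp hx
  let f : ℝ → affineSpan ℝ s := fun t =>
    ⟨t • v +ᵥ (y : E), AffineSubspace.vadd_mem_of_mem_direction (Submodule.smul_mem _ t hv) y.2⟩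
  have hf : Continuous f :=
    ((continuous_id.smul continuous_const).add continuous_const).subtype_mk _
  have hf0 : f 0 = y := Subtype.ext (by simp [f])
  filter_upwards [hf.continuousAt.preimage_mem_nhds (hf0 ▸ mem_interior_iff_mem_nhds.mp hy)]
    with t ht
  simpa [f, add_comm] using ht

theorem exists_nsmul_sub_mem_realCone {d : ℕ} {M : AddSubmonoid (Fin d → ℤ)} {x b : Fin d → ℤ}
    (hx : (fun i => (x i : ℝ)) ∈ intrinsicInterior ℝ (realCone M)) (hb : b ∈ M) :
    ∃ N : ℕ, 0 < N ∧ (fun i => ((N • x - b) i : ℝ)) ∈ realCone M := by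
  have hdir : -(fun i => (b i : ℝ)) ∈ (affineSpan ℝ (realCone M)).direction := by
    simpa using AffineSubspace.vsub_mem_direction
      (subset_affineSpan ℝ _ (realCone.zero_mem M)) (subset_affineSpan ℝ _ (realCone.cast_mem M hb))
  obtain ⟨n, hn⟩ := (tendsto_one_div_add_atTop_nhds_zero_nat.eventually
    (eventually_add_smul_mem_of_mem_intrinsicInterior hx hdir)).exists
  have hpos : (0 : ℝ) < n + 1 := n.cast_add_one_pos
  have hscaled := realCone.smul_mem M hpos.le hn
  rw [smul_add, smul_smul, mul_one_div_cancel hpos.ne', one_smul, ← sub_eq_add_neg]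
    at hscaled
  refine ⟨n + 1, n.succ_pos, ?_⟩
  convert hscaled using 1
  ext i
  simp

theorem AddSubmonoid.exists_eq_sub_of_mem_closure {G : Type*} [AddCommGroup G]
    (M : AddSubmonoid G) {x : G} (hx : x ∈ AddSubgroup.closure (M : Set G)) :
    ∃ a ∈ M, ∃ b ∈ M, x = a - b := by
  induction hx using AddSubgroup.closure_induction with
  | mem y hy => exact ⟨y, hy, 0, zero_mem _, by simp⟩
  | zero => exact ⟨0, zero_mem _, 0, zero_mem _, by simp⟩
  | add y z _ _ hy hz =>
    obtain ⟨a, ha, b, hb, rfl⟩ := hy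
    obtain ⟨a', ha', b', hb', rfl⟩ := hz
    exact ⟨a + a', add_mem ha ha', b + b', add_mem hb hb', by abel⟩
  | neg y _ hy =>
    obtain ⟨a, ha, b, hb, rfl⟩ := hy
    exact ⟨b, hb, a, ha, by abel⟩

theorem AddSubmonoid.nsmul_mem_of_mul_self_le {G : Type*} [AddMonoid G] {M : AddSubmonoid G}
    {x : G} {K : ℕ} (hK : 0 < K) (h₀ : K • x ∈ M) (h₁ : (K + 1) • x ∈ M) {n : ℕ}
    (hn : K * K ≤ n) : n • x ∈ M := by
  have hr : n % K < K := Nat.mod_lt n hK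
  have hq : K ≤ n / K := (Nat.le_div_iff_mul_le hK).mpr hn
  have hn : n = (n / K - n % K) * K + n % K * (K + 1) := by
    have := Nat.div_add_mod n K
    generalize n / K = q, n % K = r at *
    zify [show r ≤ q by omega] at *
    linear_combination -this
  rw [hn, add_nsmul, mul_nsmul', mul_nsmul']
  exact add_mem (nsmul_mem h₀ _) (nsmul_mem h₁ _)

theorem AddSubmonoid.mem_of_forall_le_nsmul_mem {G : Type*} [AddGroup G] {M : AddSubmonoid G}
    (hsn : ∀ y ∈ AddSubgroup.closure (M : Set G), 2 • y ∈ M → 3 • y ∈ M → y ∈ M)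
    {x : G} (hx : x ∈ AddSubgroup.closure (M : Set G)) (N : ℕ) (h : ∀ n, N ≤ n → n • x ∈ M) :
    x ∈ M := by
  induction N using Nat.strong_induction_on with
  | _ N ih =>
    rcases Nat.lt_or_ge N 2 with hN | hN
    · simpa using h 1 (by omega)
    · refine ih ((N + 1) / 2) (by omega) fun n hn => ?_
      refine hsn _ (nsmul_mem hx n) ?_ ?_ <;> rw [smul_smul]
      · exact h (2 * n) (by omega)
      · exact h (3 * n) (by omega)

theorem stmt_7_general (d : ℕ) (M : AddSubmonoid (Fin d → ℤ))
    (hsn : ∀ x ∈ AddSubgroup.closure (M : Set (Fin d → ℤ)),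
      2 • x ∈ M → 3 • x ∈ M → x ∈ M) :
    ∀ x ∈ AddSubgroup.closure (M : Set (Fin d → ℤ)),
      (fun i => (x i : ℝ)) ∈ intrinsicInterior ℝ (realCone M) → x ∈ M := by
  intro x hx hxi
  obtain ⟨a, ha, b, hb, rfl⟩ := M.exists_eq_sub_of_mem_closure hx
  obtain ⟨N, hN, hNC⟩ := exists_nsmul_sub_mem_realCone hxi hb
  obtain ⟨D, hD, hDM⟩ := realCone.exists_pos_nsmul_mem M hNC
  obtain ⟨D, rfl⟩ := Nat.exists_eq_add_one_of_ne_zero hD.ne'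
  have h₀ : ((D + 1) * N) • (a - b) ∈ M := by
    convert add_mem hDM (nsmul_mem hb (D + 1)) using 1
    module
  have h₁ : ((D + 1) * N + 1) • (a - b) ∈ M := by
    convert add_mem (add_mem hDM ha) (nsmul_mem hb D) using 1
    module
  exact AddSubmonoid.mem_of_forall_le_nsmul_mem hsn hx _ fun n hn =>
    AddSubmonoid.nsmul_mem_of_mul_self_le (Nat.mul_pos hD hN) h₀ h₁ hn

/-- For a seminormal affine monoid `M ⊆ ℤ^d`, the lattice points of `ℤM` lying in the
relative interior of the cone `ℝ₊M` belong to `M`. -/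
theorem stmt_7 (d : ℕ) (M : AddSubmonoid (Fin d → ℤ)) (hfg : M.FG)
    (hsn : ∀ x ∈ AddSubgroup.closure (M : Set (Fin d → ℤ)),
      2 • x ∈ M → 3 • x ∈ M → x ∈ M) :
    ∀ x ∈ AddSubgroup.closure (M : Set (Fin d → ℤ)),
      (fun i => (x i : ℝ)) ∈ intrinsicInterior ℝ (realCone M) → x ∈ M :=
  stmt_7_general d M hsn
end

section
/- Let R' ↪ R be an algebra retract of commutative rings containing a field of characteristic p > 0. If R is F-pure, then R' is F-pure. -/
/-!
Purity descends along retracts. Regard an `R'`-module `M` as an `R`-module through the retraction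
`r`. Then `b ⊗ m ↦ f b ⊗ m` is a well-defined additive map `F_* R' ⊗[R'] M → F_* R ⊗[R] M`, because
`f` commutes with Frobenius and `f c` acts on `M` as `c` does. It sends `1 ⊗ m` to `1 ⊗ m`, so
injectivity of `m ↦ 1 ⊗ m` over `R` forces it over `R'`.
-/

open TensorProduct in
/-- A ring map `f : R →+* S` is pure if for every `R`-module `M` (with `S` viewed as an
`R`-algebra via `f`) the natural map `M → S ⊗[R] M`, `m ↦ 1 ⊗ m`, is injective. -/
def IsPureRingHom {R S : Type} [CommRing R] [CommRing S] (f : R →+* S) : Prop :=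
  ∀ (M : Type) (_ : AddCommGroup M) (_ : Module R M),
    letI := f.toAlgebra
    Function.Injective (fun m : M => (1 : S) ⊗ₜ[R] m)

open TensorProduct in
theorem IsPureRingHom.of_retract {A A' B B' : Type} [CommRing A] [CommRing A'] [CommRing B]
    [CommRing B'] {φ : A →+* B} (hφ : IsPureRingHom φ) (φ' : A' →+* B') (f : A' →+* A)
    (g : B' →+* B) (r : A →+* A') (hcomm : g.comp φ' = φ.comp f)
    (hretract : r.comp f = RingHom.id A') : IsPureRingHom φ' := by
  intro M _ _
  let : Module A M := Module.compHom M r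
  let := φ.toAlgebra
  let := φ'.toAlgebra
  have hbalanced : ∀ (c : A') (b : B') (m : M), g (c • b) ⊗ₜ[A] m = g b ⊗ₜ[A] (c • m) := by
    intro c b m
    have hsmul : g (c • b) = f c • g b := by
      rw [Algebra.smul_def, Algebra.smul_def, map_mul]
      exact congrArg (· * g b) (RingHom.congr_fun hcomm c)
    have hact : (f c • m : M) = c • m :=
      congrArg (· • m) (RingHom.congr_fun hretract c)
    rw [hsmul, smul_tmul, hact]
  let ψ : B' ⊗[A'] M →+ B ⊗[A] M := liftAddHom
    (LinearMap.toAddMonoidHom'.comp ((mk A B M).toAddMonoidHom.comp g.toAddMonoidHom))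
    hbalanced
  intro m m' h
  apply hφ M
  simpa [ψ] using congrArg ψ h

theorem stmt_11_general (p : ℕ) [Fact p.Prime] (R R' : Type)
    [CommRing R] [CommRing R'] [CharP R p] [CharP R' p]
    (f : R' →+* R) (r : R →+* R') (hretract : r.comp f = RingHom.id R')
    (hpure : IsPureRingHom (frobenius R p)) :
    IsPureRingHom (frobenius R' p) :=
  hpure.of_retract (frobenius R' p) f f r (RingHom.ext (f.map_frobenius p)) hretract

/-- If `R' ↪ R` is an algebra retract of commutative rings containing a field of
characteristic `p > 0` and `R` is `F`-pure, then `R'` is `F`-pure. -/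
theorem stmt_11 (p : ℕ) [Fact p.Prime] (k R R' : Type) [Field k] [CharP k p]
    [CommRing R] [CommRing R'] [Algebra k R] [Algebra k R'] [CharP R p] [CharP R' p]
    (f : R' →+* R) (r : R →+* R') (hretract : r.comp f = RingHom.id R')
    (hpure : IsPureRingHom (frobenius R p)) :
    IsPureRingHom (frobenius R' p) :=
  stmt_11_general p R R' f r hretract hpure
end

section
/- Let M be a seminormal positive affine monoid in ℤ^d, p a prime, and suppose that for every face F of the cone ℝ₊M, the abelian group (ℤM ∩ ℝF)/ℤ(M ∩ F) has no p-torsion. Then M ∩ pℤM = pM. -/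
/-- The real cone generated by a submonoid `M ⊆ ℤ^d`. -/
def realConeOf {d : ℕ} (M : AddSubmonoid (Fin d → ℤ)) : Set (Fin d → ℝ) :=
  {y | ∃ (s : Finset (Fin d → ℤ)) (c : (Fin d → ℤ) → ℝ),
    (∀ v ∈ s, v ∈ M ∧ 0 ≤ c v) ∧ y = ∑ v ∈ s, c v • (fun i => (v i : ℝ))}

/-!
Write `x = p • g` with `x ∈ M` and `g ∈ ℤM`, and let `M` be generated by a finite set `S`.
Let `F` be the smallest face of the cone containing `g`; it is cut out by a supporting
functional `f` that is positive on every generator off `F`. The torsion hypothesis for `F`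
puts `g` in `ℤ(M ∩ F)`, which is generated by the generators on `F`. Since `g = x / p` lies
in the cone, it lies in the relative interior of `F` (Farkas' lemma), so some multiple `n • g`
is a combination of the generators on `F` with all coefficients `≥ 1`. Hence `k • g ∈ M` for
all large `k`, and seminormality brings this down to `g ∈ M`.
-/

open Finset Filter

section ConeGeometry

lemma exists_nonneg_sum_insert {ι K V : Type*} [Semiring K] [PartialOrder K] [AddCommMonoid V]
    [Module K V] [DecidableEq ι] {s : Finset ι} {a : ι} (ha : a ∉ s) (v : ι → V)
    {c : ι → K} (hc : ∀ i ∈ s, 0 ≤ c i) {μ : K} (hμ : 0 ≤ μ) :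
    ∃ c' : ι → K, (∀ i ∈ insert a s, 0 ≤ c' i) ∧
      ∑ i ∈ insert a s, c' i • v i = μ • v a + ∑ i ∈ s, c i • v i := by
  have hupd : ∀ i ∈ s, Function.update c a μ i = c i := fun i hi =>
    Function.update_of_ne (ne_of_mem_of_not_mem hi ha) _ _
  refine ⟨Function.update c a μ, fun i hi => ?_, ?_⟩
  · rcases mem_insert.1 hi with rfl | hi
    · simpa using hμ
    · exact (hupd i hi).symm ▸ hc i hi
  · rw [sum_insert ha, Function.update_self]
    exact congrArg _ (sum_congr rfl fun i hi => by rw [hupd i hi])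

def Module.Dual.face {ι K V : Type*} [CommSemiring K] [DecidableEq K] [AddCommMonoid V]
    [Module K V] (f : Module.Dual K V) (s : Finset ι) (v : ι → V) : Finset ι :=
  {i ∈ s | f (v i) = 0}

@[simp]
lemma Module.Dual.mem_face {ι K V : Type*} [CommSemiring K] [DecidableEq K] [AddCommMonoid V]
    [Module K V] {f : Module.Dual K V} {s : Finset ι} {v : ι → V} {i : ι} :
    i ∈ f.face s v ↔ i ∈ s ∧ f (v i) = 0 :=
  mem_filter

variable {ι K V : Type*} [Field K] [LinearOrder K] [IsStrictOrderedRing K]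
  [AddCommGroup V] [Module K V]

theorem farkas (s : Finset ι) (v : ι → V) (b : V) :
    (∃ c : ι → K, (∀ i ∈ s, 0 ≤ c i) ∧ ∑ i ∈ s, c i • v i = b) ∨
      ∃ f : Module.Dual K V, (∀ i ∈ s, 0 ≤ f (v i)) ∧ f b < 0 := by
  classical
  induction s using Finset.induction_on generalizing v b with
  | empty =>
    by_cases hb : b = 0
    · exact .inl ⟨0, by simp, by simp [hb]⟩
    · obtain ⟨f, hf⟩ := Module.Projective.exists_dual_eq_one K hb
      exact .inr ⟨-f, by simp, by simp [hf]⟩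
  | insert a s ha ih =>
    obtain ⟨c, hc, rfl⟩ | ⟨f, hf, hfb⟩ := ih v b
    · exact .inl (by simpa using exists_nonneg_sum_insert ha v hc le_rfl)
    by_cases hfa : 0 ≤ f (v a)
    · exact .inr ⟨f, forall_mem_insert _ _ _ |>.2 ⟨hfa, hf⟩, hfb⟩
    replace hfa := not_le.1 hfa
    -- project along `v a` onto the kernel of `f`
    set π : V →ₗ[K] V := LinearMap.id - (f (v a))⁻¹ • f.smulRight (v a)
    have hπ : ∀ y, π y = y - (f y / f (v a)) • v a := fun y => by
      simp [π, smul_smul, div_eq_inv_mul]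
    obtain ⟨c, hc, hcb⟩ | ⟨m, hm, hmb⟩ := ih (π ∘ v) (π b)
    · set y := ∑ i ∈ s, c i • v i
      have hπy : π y = π b := by simpa [y, map_sum] using hcb
      have hfy : 0 ≤ f y := by
        simp only [y, map_sum, map_smul, smul_eq_mul]
        exact sum_nonneg fun i hi => mul_nonneg (hc i hi) (hf i hi)
      obtain ⟨c', hc', hc'b⟩ := exists_nonneg_sum_insert ha v hc
        (μ := (f b - f y) / f (v a)) (div_nonneg_of_nonpos (by linarith) hfa.le)
      refine .inl ⟨c', hc', ?_⟩
      have hyb : y - (f y / f (v a)) • v a = b - (f b / f (v a)) • v a := by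
        rw [← hπ, ← hπ, hπy]
      rw [hc'b, sub_div, sub_smul]
      linear_combination (norm := module) hyb
    · refine .inr ⟨m ∘ₗ π, forall_mem_insert _ _ _ |>.2 ⟨?_, hm⟩, hmb⟩
      simp [hπ, hfa.ne]

lemma exists_add_mul_nonneg (s : Finset ι) {α β : ι → K} (hβ : ∀ i ∈ s, 0 ≤ β i)
    (hα : ∀ i ∈ s, β i = 0 → 0 ≤ α i) : ∃ κ : K, ∀ i ∈ s, 0 ≤ α i + κ * β i := by
  have hterm : ∀ i ∈ s, 0 ≤ |α i| / β i := fun i hi => div_nonneg (abs_nonneg _) (hβ i hi)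
  refine ⟨∑ i ∈ s, |α i| / β i, fun i hi => ?_⟩
  rcases (hβ i hi).eq_or_lt with hβi | hβi
  · simpa [← hβi] using hα i hi hβi.symm
  · have hle := (div_le_iff₀ hβi).1 (single_le_sum hterm hi)
    linarith [neg_abs_le (α i)]

lemma apply_eq_zero_of_apply_sum_eq_zero {s : Finset ι} {v : ι → V} {f : Module.Dual K V}
    (hf : ∀ i ∈ s, 0 ≤ f (v i)) {c : ι → K} (hc : ∀ i ∈ s, 0 ≤ c i)
    (h : f (∑ i ∈ s, c i • v i) = 0) {i : ι} (hi : i ∈ s) (hci : c i ≠ 0) : f (v i) = 0 := by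
  simp only [map_sum, map_smul, smul_eq_mul] at h
  have := (sum_eq_zero_iff_of_nonneg fun j hj => mul_nonneg (hc j hj) (hf j hj)).1 h i hi
  exact (mul_eq_zero.1 this).resolve_left hci

lemma exists_coeff_pos_of_smul_eq_add [DecidableEq ι] {T : Finset ι} {v : ι → V} {g : V}
    {a c : ι → K} (ha : ∀ i ∈ T, 0 ≤ a i) (hc : ∀ i ∈ T, 0 ≤ c i)
    (hag : ∑ i ∈ T, a i • v i = g) {w : ι} (hw : w ∈ T) {t : K} (ht : 0 ≤ t)
    (htg : t • g = v w + ∑ i ∈ T, c i • v i) :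
    ∃ c' : ι → K, (∀ i ∈ T, 0 ≤ c' i) ∧ 0 < c' w ∧ ∑ i ∈ T, c' i • v i = g := by
  set x : ι → K := fun i => a i + c i + if i = w then 1 else 0
  have hx : ∑ i ∈ T, x i • v i = (t + 1) • g := by
    simp only [x, add_smul, sum_add_distrib, ite_smul, one_smul, zero_smul, sum_ite_eq',
      if_pos hw, hag, htg]
    abel
  refine ⟨fun i => x i / (t + 1), fun i hi => ?_, ?_, ?_⟩
  · have : 0 ≤ x i := add_nonneg (add_nonneg (ha i hi) (hc i hi)) (by split_ifs <;> norm_num)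
    positivity
  · have : 0 < x w := by simp only [x, if_true]; linarith [ha w hw, hc w hw]
    positivity
  · simp_rw [div_eq_inv_mul, ← smul_smul, ← smul_sum, hx, smul_smul,
      inv_mul_cancel₀ (by positivity : t + 1 ≠ 0), one_smul]

lemma exists_pos_sum_smul_eq_of_forall_coeff_pos {T : Finset ι} {v : ι → V} {g : V}
    (hT : T.Nonempty)
    (h : ∀ w ∈ T, ∃ c : ι → K, (∀ i ∈ T, 0 ≤ c i) ∧ 0 < c w ∧ ∑ i ∈ T, c i • v i = g) :
    ∃ c : ι → K, (∀ i ∈ T, 0 < c i) ∧ ∑ i ∈ T, c i • v i = g := by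
  choose! c hc hcw hcg using h
  have hcard : (0 : K) < #T := by exact_mod_cast hT.card_pos
  refine ⟨fun i => (#T : K)⁻¹ * ∑ w ∈ T, c w i, fun i hi => ?_, ?_⟩
  · have := (hcw i hi).trans_le (single_le_sum (fun w hw => hc w hw i hi) hi)
    positivity
  · simp_rw [← smul_smul, ← smul_sum, sum_smul]
    rw [sum_comm, sum_congr rfl hcg, sum_const, ← Nat.cast_smul_eq_nsmul K, smul_smul,
      inv_mul_cancel₀ hcard.ne', one_smul]

structure IsMinimalFaceFunctional (s : Finset ι) (v : ι → V) (g : V) (f : Module.Dual K V) :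
    Prop where
  nonneg : ∀ i ∈ s, 0 ≤ f (v i)
  apply_eq_zero : f g = 0
  minimal : ∀ f' : Module.Dual K V, (∀ i ∈ s, 0 ≤ f' (v i)) → f' g = 0 →
    ∀ i ∈ f.face s v, f' (v i) = 0

lemma exists_isMinimalFaceFunctional (s : Finset ι) (v : ι → V) (g : V) :
    ∃ f : Module.Dual K V, IsMinimalFaceFunctional s v g f := by
  classical
  set P : Module.Dual K V → Prop := fun f => (∀ i ∈ s, 0 ≤ f (v i)) ∧ f g = 0
  have hwitness : ∀ i, ∃ f, P f ∧ ((∃ f', P f' ∧ f' (v i) ≠ 0) → f (v i) ≠ 0) := fun i => by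
    by_cases h : ∃ f', P f' ∧ f' (v i) ≠ 0
    · obtain ⟨f', hf', hne⟩ := h
      exact ⟨f', hf', fun _ => hne⟩
    · exact ⟨0, ⟨fun _ _ => le_rfl, rfl⟩, fun h' => (h h').elim⟩
  choose F hFP hFne using hwitness
  have hsum : ∀ y, (∑ j ∈ s, F j) y = ∑ j ∈ s, F j y := fun y => LinearMap.sum_apply _ _ _
  refine ⟨∑ j ∈ s, F j, fun i hi => ?_, ?_, fun f' hf' hf'g i hi => ?_⟩
  · rw [hsum]; exact sum_nonneg fun j _ => (hFP j).1 i hi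
  · rw [hsum]; exact sum_eq_zero fun j _ => (hFP j).2
  · obtain ⟨hi, h0⟩ := Module.Dual.mem_face.1 hi
    by_contra hne
    rw [hsum, sum_eq_zero_iff_of_nonneg fun j _ => (hFP j).1 i hi] at h0
    exact hFne i ⟨f', ⟨hf', hf'g⟩, hne⟩ (h0 i hi)

namespace IsMinimalFaceFunctional

variable {s : Finset ι} {v : ι → V} {g : V} {f : Module.Dual K V}

lemma exists_coeff_pos (hf : IsMinimalFaceFunctional s v g f) {a : ι → K}
    (ha : ∀ i ∈ f.face s v, 0 ≤ a i) (hag : ∑ i ∈ f.face s v, a i • v i = g) {w : ι}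
    (hw : w ∈ f.face s v) :
    ∃ c : ι → K, (∀ i ∈ f.face s v, 0 ≤ c i) ∧ 0 < c w ∧ ∑ i ∈ f.face s v, c i • v i = g := by
  classical
  set T := f.face s v
  -- Farkas for `-v w` against the `v i` with `i ∈ T` together with `-g` (indexed by `none`)
  obtain ⟨c, hc, hcw⟩ | ⟨f', hf', hf'w⟩ :=
    farkas (K := K) (insertNone T) (fun o => o.elim (-g) v) (-v w)
  · have hcT : ∀ i ∈ T, 0 ≤ c (some i) := fun i hi => hc _ (mem_insertNone.2 (by simpa))
    refine exists_coeff_pos_of_smul_eq_add ha hcT hag hw (hc none (by simp)) ?_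
    rw [sum_insertNone] at hcw
    simp only [Option.elim_none, Option.elim_some, smul_neg] at hcw
    linear_combination (norm := module) -hcw
  · have hf'T : ∀ i ∈ T, 0 ≤ f' (v i) := fun i hi => hf' (some i) (mem_insertNone.2 (by simpa))
    have hf'g : f' g = 0 := by
      refine le_antisymm (by simpa using hf' none (by simp)) ?_
      rw [← hag]
      simp only [map_sum, map_smul, smul_eq_mul]
      exact sum_nonneg fun i hi => mul_nonneg (ha i hi) (hf'T i hi)
    -- tilting `f'` by a multiple of `f` keeps `f' (v w) > 0` and makes it supporting on `s`
    obtain ⟨κ, hκ⟩ := exists_add_mul_nonneg s hf.nonneg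
      (α := fun i => f' (v i)) fun i hi h0 => hf'T i (Module.Dual.mem_face.2 ⟨hi, h0⟩)
    have := hf.minimal (f' + κ • f) (by simpa using hκ) (by simp [hf'g, hf.apply_eq_zero]) w hw
    simp only [LinearMap.add_apply, LinearMap.smul_apply, (Module.Dual.mem_face.1 hw).2,
      smul_zero, add_zero] at this
    simp [this] at hf'w

lemma exists_pos_sum_smul_eq (hf : IsMinimalFaceFunctional s v g f) {a : ι → K}
    (ha : ∀ i ∈ s, 0 ≤ a i) (hag : ∑ i ∈ s, a i • v i = g) :
    ∃ c : ι → K, (∀ i ∈ f.face s v, 0 < c i) ∧ ∑ i ∈ f.face s v, c i • v i = g := by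
  have hagT : ∑ i ∈ f.face s v, a i • v i = g := by
    rw [Module.Dual.face, sum_filter_of_ne fun i hi hne => apply_eq_zero_of_apply_sum_eq_zero
      hf.nonneg ha (hag ▸ hf.apply_eq_zero) hi fun h0 => hne (by rw [h0, zero_smul])]
    exact hag
  rcases (f.face s v).eq_empty_or_nonempty with hT | hT
  · exact ⟨a, fun i hi => by simp [hT] at hi, hagT⟩
  · exact exists_pos_sum_smul_eq_of_forall_coeff_pos hT fun w hw =>
      hf.exists_coeff_pos (fun i hi => ha i (Module.Dual.mem_face.1 hi).1) hagT hw

end IsMinimalFaceFunctional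

end ConeGeometry

def AddSubmonoid.IsSeminormal {G : Type*} [AddCommGroup G] (M : AddSubmonoid G) : Prop :=
  ∀ x ∈ AddSubgroup.closure (M : Set G), 2 • x ∈ M → 3 • x ∈ M → x ∈ M

section Multiples

variable {G : Type*} [AddCommGroup G] {M : AddSubmonoid G}

lemma AddSubmonoid.IsSeminormal.mem_of_eventually_nsmul_mem (hM : M.IsSeminormal) {g : G}
    (hg : g ∈ AddSubgroup.closure (M : Set G)) (h : ∀ᶠ k : ℕ in atTop, k • g ∈ M) : g ∈ M := by
  obtain ⟨N, hN⟩ := eventually_atTop.1 h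
  suffices ∀ j n, 0 < n → N ≤ n + j → n • g ∈ M by simpa using this N 1 one_pos (by omega)
  intro j
  induction j with
  | zero => exact fun n _ hn => hN n hn
  | succ j ih =>
    intro n hn hnj
    by_cases hNn : N ≤ n
    · exact hN n hNn
    · refine hM _ (nsmul_mem hg n) ?_ ?_ <;> rw [smul_smul]
      · exact ih _ (by omega) (by omega)
      · exact ih _ (by omega) (by omega)

lemma sum_nsmul_sub_mem {T : Finset G} (hT : ∀ u ∈ T, u ∈ M) {m : G → ℕ} {u : G} (hu : u ∈ T)
    (hm : 0 < m u) : ∑ v ∈ T, m v • v - u ∈ M := by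
  classical
  obtain ⟨k, hk⟩ := Nat.exists_eq_add_one.2 hm
  have hsplit : ∑ v ∈ T, m v • v - u = k • u + ∑ v ∈ T.erase u, m v • v := by
    rw [← add_sum_erase T _ hu, hk, succ_nsmul]
    abel
  rw [hsplit]
  exact add_mem (nsmul_mem (hT u hu) k)
    (sum_mem fun v hv => nsmul_mem (hT v (mem_of_mem_erase hv)) _)

lemma eventually_nsmul_add_mem {T : Set G} (hT : T ⊆ M) {h : G} (hh : h ∈ M)
    (hTh : ∀ u ∈ T, h - u ∈ M) {y : G} (hy : y ∈ AddSubgroup.closure T) :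
    ∀ᶠ t : ℕ in atTop, t • h + y ∈ M := by
  induction hy using AddSubgroup.closure_induction'' with
  | mem u hu => exact .of_forall fun t => add_mem (nsmul_mem hh t) (hT hu)
  | neg_mem u hu =>
    filter_upwards [eventually_ge_atTop 1] with t ht
    obtain ⟨k, rfl⟩ := Nat.exists_eq_add_of_le' ht
    rw [succ_nsmul, add_assoc, ← sub_eq_add_neg]
    exact add_mem (nsmul_mem hh k) (hTh u hu)
  | zero => exact .of_forall fun t => by simpa using nsmul_mem hh t
  | add y z _ _ hy hz =>
    obtain ⟨N, hN⟩ := eventually_atTop.1 hy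
    obtain ⟨N', hN'⟩ := eventually_atTop.1 hz
    filter_upwards [eventually_ge_atTop (N + N')] with t ht
    obtain ⟨k, rfl⟩ := Nat.exists_eq_add_of_le ht
    have hsplit : (N + N' + k) • h + (y + z) = (N • h + y) + ((N' + k) • h + z) := by
      simp only [add_nsmul]
      abel
    rw [hsplit]
    exact add_mem (hN N le_rfl) (hN' _ (Nat.le_add_right _ _))

lemma eventually_nsmul_mem {g : G} {n : ℕ} (hn : 0 < n)
    (h : ∀ r < n, ∀ᶠ t : ℕ in atTop, t • n • g + r • g ∈ M) :
    ∀ᶠ k : ℕ in atTop, k • g ∈ M := by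
  have h' : ∀ᶠ t : ℕ in atTop, ∀ r ∈ range n, t • n • g + r • g ∈ M :=
    (eventually_all_finset _).2 fun r hr => h r (mem_range.1 hr)
  filter_upwards [(Nat.tendsto_div_const_atTop hn.ne').eventually h'] with k hk
  simpa [← mul_nsmul', ← add_nsmul, mul_comm n, Nat.div_add_mod'] using
    hk (k % n) (mem_range.2 (Nat.mod_lt k hn))

lemma eventually_nsmul_mem_of_sum_nsmul_eq {T : Finset G} (hT : ∀ u ∈ T, u ∈ M) {m : G → ℕ}
    (hm : ∀ u ∈ T, 0 < m u) {g : G} (hg : g ∈ AddSubgroup.closure (T : Set G)) {n : ℕ}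
    (hn : 0 < n) (hmn : ∑ u ∈ T, m u • u = n • g) : ∀ᶠ k : ℕ in atTop, k • g ∈ M :=
  eventually_nsmul_mem hn fun r _ => hmn ▸ eventually_nsmul_add_mem hT
    (sum_mem fun u hu => nsmul_mem (hT u hu) _) (fun u hu => sum_nsmul_sub_mem hT hu (hm u hu))
    (nsmul_mem hg r)

end Multiples

section Embedding

variable {G K V : Type*} [AddCommGroup G] [Field K] [LinearOrder K] [IsStrictOrderedRing K]
  [AddCommGroup V] [Module K V]

lemma apply_nonneg_of_mem_closure (φ : G →+ V) {f : Module.Dual K V} {S : Set G}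
    (h : ∀ u ∈ S, 0 ≤ f (φ u)) {y : G} (hy : y ∈ AddSubmonoid.closure S) : 0 ≤ f (φ y) := by
  induction hy using AddSubmonoid.closure_induction with
  | mem u hu => exact h u hu
  | zero => simp
  | add y z _ _ hy hz => simpa using add_nonneg hy hz

lemma mem_closure_face_of_apply_eq_zero (φ : G →+ V) {f : Module.Dual K V} {S : Finset G}
    (hf : ∀ u ∈ S, 0 ≤ f (φ u)) {y : G} (hy : y ∈ AddSubmonoid.closure (S : Set G))
    (hy0 : f (φ y) = 0) : y ∈ AddSubmonoid.closure (f.face S φ : Set G) := by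
  classical
  obtain ⟨b, -, rfl⟩ := AddSubmonoid.mem_closure_finset.1 hy
  have hφ : φ (∑ u ∈ S, b u • u) = ∑ u ∈ S, (b u : K) • φ u := by
    simp [map_sum, map_nsmul, Nat.cast_smul_eq_nsmul]
  rw [hφ] at hy0
  rw [← sum_filter_of_ne fun u hu hne => apply_eq_zero_of_apply_sum_eq_zero hf
    (fun u _ => Nat.cast_nonneg (b u)) hy0 hu (by exact_mod_cast fun h => hne (by simp [h]))]
  exact sum_mem fun u hu => nsmul_mem (AddSubmonoid.subset_closure hu) _

lemma exists_nonneg_sum_eq_of_nsmul_mem_closure (φ : G →+ V) {S : Finset G} {n : ℕ}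
    (hn : 0 < n) {g : G} (hg : n • g ∈ AddSubmonoid.closure (S : Set G)) :
    ∃ a : G → K, (∀ u ∈ S, 0 ≤ a u) ∧ ∑ u ∈ S, a u • φ u = φ g := by
  obtain ⟨b, -, hb⟩ := AddSubmonoid.mem_closure_finset.1 hg
  have hbg : ∑ u ∈ S, (b u : K) • φ u = (n : K) • φ g := by
    rw [Nat.cast_smul_eq_nsmul, ← map_nsmul, ← hb, map_sum]
    simp [Nat.cast_smul_eq_nsmul]
  refine ⟨fun u => (b u : K) / n, fun u _ => by positivity, ?_⟩
  simp_rw [div_eq_inv_mul, ← smul_smul, ← smul_sum, hbg, smul_smul,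
    inv_mul_cancel₀ (Nat.cast_ne_zero.2 hn.ne' : (n : K) ≠ 0), one_smul]

end Embedding

lemma exists_nat_mul_eq_intCast {ι : Type*} (T : Finset ι) (c : ι → ℚ) :
    ∃ D : ℕ, 0 < D ∧ ∀ i ∈ T, ∃ m : ℤ, (D : ℚ) * c i = m := by
  refine ⟨∏ i ∈ T, (c i).den, prod_pos fun i _ => (c i).den_pos, fun i hi => ?_⟩
  obtain ⟨k, hk⟩ := dvd_prod_of_mem (fun i => (c i).den) hi
  refine ⟨k * (c i).num, ?_⟩
  rw [hk]
  push_cast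
  rw [← Rat.mul_den_eq_num]
  ring

lemma exists_pos_sum_nsmul_eq_nsmul {G V : Type*} [AddCommGroup G] [AddCommGroup V] [Module ℚ V]
    {φ : G →+ V} (hφ : Function.Injective φ) {T : Finset G} {c : G → ℚ}
    (hc : ∀ u ∈ T, 0 < c u) {g : G} (hg : ∑ u ∈ T, c u • φ u = φ g) :
    ∃ n > 0, ∃ m : G → ℕ, (∀ u ∈ T, 0 < m u) ∧ ∑ u ∈ T, m u • u = n • g := by
  obtain ⟨D, hD, hm⟩ := exists_nat_mul_eq_intCast T c
  choose! m hm using hm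
  have hm0 : ∀ u ∈ T, 0 < m u := fun u hu => by
    have := mul_pos (Nat.cast_pos.2 hD) (hc u hu)
    rw [hm u hu] at this
    exact_mod_cast this
  refine ⟨D, hD, fun u => (m u).toNat, fun u hu => by simpa using hm0 u hu, hφ ?_⟩
  rw [map_nsmul, ← hg, map_sum, smul_sum]
  refine sum_congr rfl fun u hu => ?_
  rw [map_nsmul, ← Nat.cast_smul_eq_nsmul ℚ, ← Nat.cast_smul_eq_nsmul ℚ D, smul_smul, hm u hu]
  congr 1
  exact_mod_cast Int.toNat_of_nonneg (hm0 u hu).le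

section RealCone

variable {d : ℕ} {M : AddSubmonoid (Fin d → ℤ)}

lemma intCast_mem_realConeOf {v : Fin d → ℤ} (hv : v ∈ M) :
    (fun i => (v i : ℝ)) ∈ realConeOf M :=
  ⟨{v}, fun _ => 1, by simpa using hv, by simp⟩

lemma exists_real_extension_nonneg_on_realConeOf (f : Module.Dual ℚ (Fin d → ℚ))
    (hf : ∀ v ∈ M, 0 ≤ f (fun i => (v i : ℚ))) :
    ∃ ℓ : (Fin d → ℝ) →ₗ[ℝ] ℝ, (∀ y ∈ realConeOf M, 0 ≤ ℓ y) ∧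
      ∀ v : Fin d → ℤ, ℓ (fun i => (v i : ℝ)) = f (fun i => (v i : ℚ)) := by
  set ℓ : (Fin d → ℝ) →ₗ[ℝ] ℝ :=
    ∑ i, (f (fun j => if i = j then 1 else 0) : ℝ) • LinearMap.proj i
  have hℓ : ∀ v : Fin d → ℤ, ℓ (fun i => (v i : ℝ)) = f (fun i => (v i : ℚ)) := fun v => by
    rw [f.pi_apply_eq_sum_univ]
    simp [ℓ, mul_comm]
  refine ⟨ℓ, ?_, hℓ⟩
  rintro _ ⟨s, c, hsc, rfl⟩
  rw [map_sum]
  refine sum_nonneg fun v hv => ?_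
  rw [map_smul, smul_eq_mul, hℓ]
  exact mul_nonneg (hsc v hv).2 (by exact_mod_cast hf v (hsc v hv).1)

lemma intCast_mem_span_of_nsmul_mem {s : Set (Fin d → ℝ)} {n : ℕ} (hn : n ≠ 0)
    {g : Fin d → ℤ} (h : (fun i => ((n • g) i : ℝ)) ∈ s) :
    (fun i => (g i : ℝ)) ∈ Submodule.span ℝ s := by
  have : (fun i => (g i : ℝ)) = (n : ℝ)⁻¹ • fun i => ((n • g) i : ℝ) := by
    funext i
    simp [hn]
  rw [this]
  exact Submodule.smul_mem _ _ (Submodule.subset_span h)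

end RealCone

theorem stmt_13_general (d : ℕ) (p : ℕ) (hp : p.Prime) (M : AddSubmonoid (Fin d → ℤ))
    (hfg : M.FG)
    (hsn : ∀ x ∈ AddSubgroup.closure (M : Set (Fin d → ℤ)),
      2 • x ∈ M → 3 • x ∈ M → x ∈ M)
    (htor : ∀ ℓ : (Fin d → ℝ) →ₗ[ℝ] ℝ, (∀ y ∈ realConeOf M, 0 ≤ ℓ y) →
      ∀ g ∈ AddSubgroup.closure (M : Set (Fin d → ℤ)),
        (fun i => (g i : ℝ)) ∈
          Submodule.span ℝ {y ∈ realConeOf M | ℓ y = 0} →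
        p • g ∈ AddSubgroup.closure
          {x : Fin d → ℤ | x ∈ M ∧ (fun i => (x i : ℝ)) ∈ realConeOf M ∧
            ℓ (fun i => (x i : ℝ)) = 0} →
        g ∈ AddSubgroup.closure
          {x : Fin d → ℤ | x ∈ M ∧ (fun i => (x i : ℝ)) ∈ realConeOf M ∧
            ℓ (fun i => (x i : ℝ)) = 0}) :
    ∀ x : Fin d → ℤ,
      (x ∈ M ∧ ∃ g ∈ AddSubgroup.closure (M : Set (Fin d → ℤ)), x = p • g) ↔
      (∃ m ∈ M, x = p • m) := by
  classical
  intro x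
  refine ⟨fun ⟨hxM, g, hg, hxg⟩ => ⟨g, ?_, hxg⟩,
    fun ⟨m, hm, hxm⟩ => ⟨hxm ▸ nsmul_mem hm p, m, AddSubgroup.subset_closure hm, hxm⟩⟩
  obtain ⟨S, rfl⟩ := hfg
  set φ : (Fin d → ℤ) →+ (Fin d → ℚ) := (Int.castAddHom ℚ).compLeft (Fin d)
  obtain ⟨f, hf⟩ := exists_isMinimalFaceFunctional (K := ℚ) S φ (φ g)
  obtain ⟨ℓ, hℓM, hℓ⟩ :=
    exists_real_extension_nonneg_on_realConeOf f fun _ hv =>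
      apply_nonneg_of_mem_closure φ hf.nonneg hv
  have hℓx : ℓ (fun i => (x i : ℝ)) = 0 := by
    rw [hℓ]
    exact_mod_cast show f (φ x) = 0 by rw [hxg, map_nsmul, map_nsmul, hf.apply_eq_zero, smul_zero]
  have hgT : g ∈ AddSubgroup.closure (f.face S φ : Set (Fin d → ℤ)) := by
    refine (AddSubgroup.closure_le _).2 ?_ <| htor ℓ hℓM g hg
      (intCast_mem_span_of_nsmul_mem hp.ne_zero
        (by rw [← hxg]; exact ⟨intCast_mem_realConeOf hxM, hℓx⟩))
      (by rw [← hxg]; exact AddSubgroup.subset_closure ⟨hxM, intCast_mem_realConeOf hxM, hℓx⟩)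
    rintro y ⟨hyM, -, hy0⟩
    rw [hℓ] at hy0
    exact AddSubmonoid.closure_le.2 AddSubgroup.subset_closure
      (mem_closure_face_of_apply_eq_zero φ hf.nonneg hyM (by exact_mod_cast hy0))
  obtain ⟨a, ha, hag⟩ :=
    exists_nonneg_sum_eq_of_nsmul_mem_closure (K := ℚ) φ hp.pos (hxg ▸ hxM)
  obtain ⟨c, hc, hcg⟩ := hf.exists_pos_sum_smul_eq ha hag
  obtain ⟨n, hn, m, hm, hmn⟩ := exists_pos_sum_nsmul_eq_nsmul Int.cast_injective.comp_left hc hcg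
  exact AddSubmonoid.IsSeminormal.mem_of_eventually_nsmul_mem hsn hg
    (eventually_nsmul_mem_of_sum_nsmul_eq
      (fun u hu => AddSubmonoid.subset_closure (Module.Dual.mem_face.1 hu).1) hm hgT hn hmn)

/-- Let `M ⊆ ℤ^d` be a seminormal positive affine monoid and `p` a prime such that for
every face `F` of `ℝ₊M` (cut out by a supporting linear functional), the group
`(ℤM ∩ ℝF)/ℤ(M ∩ F)` has no `p`-torsion.  Then `M ∩ pℤM = pM`. -/
theorem stmt_13 (d : ℕ) (p : ℕ) (hp : p.Prime) (M : AddSubmonoid (Fin d → ℤ))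
    (hfg : M.FG)
    (hpos : ∀ z ∈ M, -z ∈ M → z = 0)
    (hsn : ∀ x ∈ AddSubgroup.closure (M : Set (Fin d → ℤ)),
      2 • x ∈ M → 3 • x ∈ M → x ∈ M)
    (htor : ∀ ℓ : (Fin d → ℝ) →ₗ[ℝ] ℝ, (∀ y ∈ realConeOf M, 0 ≤ ℓ y) →
      ∀ g ∈ AddSubgroup.closure (M : Set (Fin d → ℤ)),
        (fun i => (g i : ℝ)) ∈
          Submodule.span ℝ {y ∈ realConeOf M | ℓ y = 0} →
        p • g ∈ AddSubgroup.closure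
          {x : Fin d → ℤ | x ∈ M ∧ (fun i => (x i : ℝ)) ∈ realConeOf M ∧
            ℓ (fun i => (x i : ℝ)) = 0} →
        g ∈ AddSubgroup.closure
          {x : Fin d → ℤ | x ∈ M ∧ (fun i => (x i : ℝ)) ∈ realConeOf M ∧
            ℓ (fun i => (x i : ℝ)) = 0}) :
    ∀ x : Fin d → ℤ,
      (x ∈ M ∧ ∃ g ∈ AddSubgroup.closure (M : Set (Fin d → ℤ)), x = p • g) ↔
      (∃ m ∈ M, x = p • m) :=
  stmt_13_general d p hp M hfg hsn htor
end

section
/- Let M ⊆ ℤ² be the monoid generated by x = (3,0), y = (3,1), z = (3,3) and let a = (0,−1). In the monoid algebra A = k[M] over a field k, localized at the multiplicative set of monomials of M (giving A_C = k[ℤM]), the degree-a graded component of A_C is nonzero (it contains t^x/t^y), while the degree-a components of the localizations A_x (at t^x) and A_z (at t^z) are both zero. -/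
/-!
Every `u` in the monoid generated by `(3,0)`, `(3,1)`, `(3,3)` has `u₁ ≥ 0` and
`u₀ - u₁ ∈ {0} ∪ [2, ∞)`, since these conditions are stable under addition. A degree-`a`
fraction `t^u / t^(n x)` would need `u₁ = -1`, and `t^u / t^(n z)` would need
`u = (3n, 3n - 1)`, so `u₀ - u₁ = 1`; hence no monomial spanning `A_x` or `A_z` has
degree `a`. In `A_C` on the other hand `t^x / t^y = t^a`.
-/

open AddMonoidAlgebra

theorem AddMonoidAlgebra.span_inf_span_single_eq_bot {k G : Type*} [Field k]
    {S : Set (AddMonoidAlgebra k G)} {a : G} (hS : ∀ f ∈ S, f.coeff a = 0) :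
    Submodule.span k S ⊓ Submodule.span k {single a (1 : k)} = ⊥ := by
  let coeffAt : AddMonoidAlgebra k G →ₗ[k] k :=
    Finsupp.lapply a ∘ₗ (coeffLinearEquiv k).toLinearMap
  have hspan : Submodule.span k S ≤ LinearMap.ker coeffAt := Submodule.span_le.2 hS
  have hnot : single a (1 : k) ∉ Submodule.span k S := fun h ↦ by
    simpa [coeffAt] using hspan h
  exact disjoint_iff.1 (Submodule.disjoint_span_singleton_of_notMem hnot)

theorem nonneg_and_gap_of_mem_closure {u : Fin 2 → ℤ}
    (hu : u ∈ AddSubmonoid.closure ({![3, 0], ![3, 1], ![3, 3]} : Set (Fin 2 → ℤ))) :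
    0 ≤ u 1 ∧ (u 1 + 2 ≤ u 0 ∨ u 1 = u 0) := by
  induction hu using AddSubmonoid.closure_induction with
  | mem v hv => rcases hv with rfl | rfl | rfl <;> simp
  | zero => simp
  | add v w _ _ hv hw =>
    simp only [Pi.add_apply]
    omega

theorem sub_nsmul_ne_of_mem_closure {u : Fin 2 → ℤ}
    (hu : u ∈ AddSubmonoid.closure ({![3, 0], ![3, 1], ![3, 3]} : Set (Fin 2 → ℤ)))
    (n : ℕ) : u - n • ![3, 0] ≠ ![0, -1] ∧ u - n • ![3, 3] ≠ ![0, -1] := by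
  obtain ⟨hu₁, hgap⟩ := nonneg_and_gap_of_mem_closure hu
  refine ⟨fun h ↦ ?_, fun h ↦ ?_⟩
  · have h₁ : u 1 = -1 := by simpa using congrFun h 1
    omega
  · have h₀ : u 0 = n * 3 := by simpa [sub_eq_zero] using congrFun h 0
    have h₁ : u 1 - n * 3 = -1 := by simpa using congrFun h 1
    omega

/-- For the monoid `M ⊆ ℤ²` generated by `x=(3,0)`, `y=(3,1)`, `z=(3,3)` and `a=(0,−1)`:
inside the Laurent algebra `B = k[ℤ²]` (whose degree-`a` component is `k·t^a`), the
localization `A_C = k[ℤM]` (spanned by monomials `t^(u−v)`, `u,v ∈ M`) has nonzero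
degree-`a` component (it contains `t^x/t^y = t^a`), while the localizations `A_x`
(spanned by `t^(u−n·x)`) and `A_z` (spanned by `t^(u−n·z)`) have zero degree-`a`
components. -/
theorem stmt_15 (k : Type) [Field k] :
    let M : AddSubmonoid (Fin 2 → ℤ) :=
      AddSubmonoid.closure {![3, 0], ![3, 1], ![3, 3]}
    let a : Fin 2 → ℤ := ![0, -1]
    let AC : Submodule k (AddMonoidAlgebra k (Fin 2 → ℤ)) :=
      Submodule.span k
        {f | ∃ u ∈ M, ∃ v ∈ M, f = AddMonoidAlgebra.single (u - v) (1 : k)}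
    let Ax : Submodule k (AddMonoidAlgebra k (Fin 2 → ℤ)) :=
      Submodule.span k
        {f | ∃ u ∈ M, ∃ n : ℕ, f = AddMonoidAlgebra.single (u - n • ![3, 0]) (1 : k)}
    let Az : Submodule k (AddMonoidAlgebra k (Fin 2 → ℤ)) :=
      Submodule.span k
        {f | ∃ u ∈ M, ∃ n : ℕ, f = AddMonoidAlgebra.single (u - n • ![3, 3]) (1 : k)}
    (AddMonoidAlgebra.single a (1 : k) ∈ AC ∧ AddMonoidAlgebra.single a (1 : k) ≠ 0) ∧
    Ax ⊓ Submodule.span k {AddMonoidAlgebra.single a (1 : k)} = ⊥ ∧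
    Az ⊓ Submodule.span k {AddMonoidAlgebra.single a (1 : k)} = ⊥ := by
  intro M a AC Ax Az
  have hx : ![3, 0] ∈ M := AddSubmonoid.subset_closure (by simp)
  have hy : ![3, 1] ∈ M := AddSubmonoid.subset_closure (by simp)
  refine ⟨⟨Submodule.subset_span ⟨_, hx, _, hy, ?_⟩, by simp⟩, ?_, ?_⟩
  · congr 1
    ext i
    fin_cases i <;> simp [a]
  · refine span_inf_span_single_eq_bot ?_
    rintro _ ⟨u, hu, n, rfl⟩
    exact Finsupp.single_eq_of_ne (sub_nsmul_ne_of_mem_closure hu n).1.symm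
  · refine span_inf_span_single_eq_bot ?_
    rintro _ ⟨u, hu, n, rfl⟩
    exact Finsupp.single_eq_of_ne (sub_nsmul_ne_of_mem_closure hu n).2.symm
end
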